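/- arXiv:1201.1161 — 4 statements merged into one kernel-verified Lean document; each statement's English description precedes it below -/
import Mathlib

section
/- The map I_∞ : [0,∞] → Δ, x ↦ f_{x,1}, is a morphism of quantales from ([0,∞], +, 0) with the reversed order to (Δ, ⊗, ε): it preserves suprema, I_∞(0) = ε, and I_∞(x+y) = I_∞(x) ⊗ I_∞(y); moreover it has right adjoint P_∞(f) = inf{x : f(x) = 1} and left adjoint O_∞(f) = sup{x : f(x) = 0}. -/
/-! A distribution function `f` lies above `f_{x,1}` iff it equals `1` on `(x, ∞]`, and, being
left continuous, below `f_{x,1}` iff it vanishes on `[0, x)`; since `{f = 1}` is an upper set and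
`{f = 0}` a lower set, these conditions read `P∞ f ≤ x` and `x ≤ O∞ f`. The first adjunction, read
through the reversed order on `[0,∞]`, is a Galois connection, so `I∞` preserves suprema. The
convolution identity holds because any `x + y < t` splits as `r + s < t` with `x < r` and `y < s`. -/

open scoped ENNReal

noncomputable section

/-- A distribution function: a monotone map `f : [0,∞] → [0,1]` which is
left continuous in the sense that `f x = ⨆ y < x, f y`. (We realise `[0,1]`
as the elements of `ℝ≥0∞` below `1`.) -/
def IsDistr (f : ℝ≥0∞ → ℝ≥0∞) : Prop :=
  (∀ t, f t ≤ 1) ∧ Monotone f ∧ ∀ x, f x = ⨆ y, ⨆ _ : y < x, f y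

/-- The set `Δ` of distribution functions, with the pointwise order. -/
def Distr : Type := {f : ℝ≥0∞ → ℝ≥0∞ // IsDistr f}

noncomputable instance : PartialOrder Distr :=
  inferInstanceAs (PartialOrder {f : ℝ≥0∞ → ℝ≥0∞ // IsDistr f})

/-- The step function `f_{δ,u}`: value `0` for `t ≤ δ` and `u` for `t > δ`. -/
def stepFun (δ u : ℝ≥0∞) : ℝ≥0∞ → ℝ≥0∞ := fun t => if t ≤ δ then 0 else u

/-- The convolution product `(f ⊗ g)(t) = ⨆_{r+s ≤ t} f r * g s`. -/
def conv (f g : ℝ≥0∞ → ℝ≥0∞) : ℝ≥0∞ → ℝ≥0∞ :=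
  fun t => ⨆ r, ⨆ s, ⨆ _ : r + s ≤ t, f r * g s

/-- The unit `ε = f_{0,1}` of the quantale `Δ`. -/
def epsFun : ℝ≥0∞ → ℝ≥0∞ := stepFun 0 1

section DenseCompleteLinearOrder

variable {α : Type*} [CompleteLinearOrder α] [DenselyOrdered α] {s : Set α} {x : α}

theorem IsUpperSet.sInf_le_iff (hs : IsUpperSet s) : sInf s ≤ x ↔ ∀ t, x < t → t ∈ s := by
  refine ⟨fun h t hxt => ?_, fun h => le_of_forall_gt_imp_ge_of_dense fun t ht => sInf_le (h t ht)⟩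
  obtain ⟨r, hr, hrt⟩ := sInf_lt_iff.mp (h.trans_lt hxt)
  exact hs hrt.le hr

theorem IsLowerSet.le_sSup_iff (hs : IsLowerSet s) : x ≤ sSup s ↔ ∀ t, t < x → t ∈ s :=
  hs.toDual.sInf_le_iff

end DenseCompleteLinearOrder

section StepFun

variable {x y u v t : ℝ≥0∞}

theorem stepFun_of_le (h : t ≤ x) : stepFun x u t = 0 := if_pos h

theorem stepFun_of_lt (h : x < t) : stepFun x u t = u := if_neg h.not_ge

theorem stepFun_apply_le : stepFun x u t ≤ u := by
  rcases le_or_gt t x with h | h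
  · simp [stepFun_of_le h]
  · rw [stepFun_of_lt h]

theorem stepFun_le_iff {f : ℝ≥0∞ → ℝ≥0∞} : stepFun x u ≤ f ↔ ∀ t, x < t → u ≤ f t := by
  refine forall_congr' fun t => ?_
  rcases le_or_gt t x with h | h
  · simp [stepFun_of_le h, h.not_gt]
  · simp [stepFun_of_lt h, h]

theorem conv_stepFun : conv (stepFun x u) (stepFun y v) = stepFun (x + y) (u * v) := by
  funext t
  rcases le_or_gt t (x + y) with ht | ht
  · rw [stepFun_of_le ht]
    refine le_antisymm (iSup_le fun r => iSup_le fun s => iSup_le fun hrs => ?_) zero_le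
    rcases le_or_gt r x with hr | hr
    · simp [stepFun_of_le hr]
    rcases le_or_gt s y with hs | hs
    · simp [stepFun_of_le hs]
    exact absurd (hrs.trans ht) (ENNReal.add_lt_add hr hs).not_ge
  · rw [stepFun_of_lt ht]
    refine le_antisymm (iSup_le fun r => iSup_le fun s => iSup_le fun _ =>
      mul_le_mul' stepFun_apply_le stepFun_apply_le) ?_
    obtain ⟨r, hr, s, hs, hrs⟩ := ENNReal.exists_add_lt_of_add_lt ht
    refine le_iSup_of_le r (le_iSup_of_le s (le_iSup_of_le hrs.le ?_))
    rw [stepFun_of_lt hr, stepFun_of_lt hs]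

end StepFun

section DistributionFunction

variable {f : ℝ≥0∞ → ℝ≥0∞} {x : ℝ≥0∞}

theorem stepFun_one_le_iff_sInf_le (hf1 : ∀ t, f t ≤ 1) (hf : Monotone f) :
    stepFun x 1 ≤ f ↔ sInf {t | f t = 1} ≤ x := by
  have hup : IsUpperSet {t | f t = 1} := fun a b hab ha => le_antisymm (hf1 b) (ha ▸ hf hab)
  rw [hup.sInf_le_iff, stepFun_le_iff]
  exact forall₂_congr fun t _ => (hf1 t).ge_iff_eq

theorem le_stepFun_one_iff (hf1 : ∀ t, f t ≤ 1) (hf : Monotone f) :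
    f ≤ stepFun x 1 ↔ f x = 0 := by
  refine ⟨fun h => le_antisymm ((h x).trans (stepFun_of_le le_rfl).le) zero_le, fun h t => ?_⟩
  rcases le_or_gt t x with ht | ht
  · rw [stepFun_of_le ht]
    exact (hf ht).trans h.le
  · rw [stepFun_of_lt ht]
    exact hf1 t

theorem le_stepFun_one_iff_le_sSup (hf1 : ∀ t, f t ≤ 1) (hf : Monotone f)
    (hx : f x = ⨆ y, ⨆ _ : y < x, f y) : f ≤ stepFun x 1 ↔ x ≤ sSup {t | f t = 0} := by
  have hlow : IsLowerSet {t | f t = 0} := fun a b hba ha => le_antisymm ((hf hba).trans ha.le) zero_le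
  rw [le_stepFun_one_iff hf1 hf, hlow.le_sSup_iff, hx]
  simp [ENNReal.iSup_eq_zero]

end DistributionFunction

/-- The map `I∞ : [0,∞] → Δ`, `x ↦ f_{x,1}`, is a morphism of quantales from
`([0,∞], ≥, +, 0)` to `(Δ, ⊗, ε)`: it sends suprema of `([0,∞], ≥)` (that is,
infima of `[0,∞]`) to suprema in `Δ`, sends the unit `0` to `ε`, and sends
`+` to `⊗`; moreover it has right adjoint `P∞ f = inf {x | f x = 1}` and left
adjoint `O∞ f = sup {x | f x = 0}` (adjointness taken with respect to the
reversed order on `[0,∞]`). -/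
theorem Iinfty_quantale_morphism (I : ℝ≥0∞ → Distr)
    (hI : ∀ x, (I x).1 = stepFun x 1) :
    (∀ S : Set ℝ≥0∞, IsLUB (I '' S) (I (sInf S))) ∧
    (I 0).1 = epsFun ∧
    (∀ x y, conv (I x).1 (I y).1 = (I (x + y)).1) ∧
    (∀ (x : ℝ≥0∞) (f : Distr), I x ≤ f ↔ sInf {t | f.1 t = 1} ≤ x) ∧
    (∀ (x : ℝ≥0∞) (f : Distr), f ≤ I x ↔ x ≤ sSup {t | f.1 t = 0}) := by
  have right_adjoint (x : ℝ≥0∞) (f : Distr) : I x ≤ f ↔ sInf {t | f.1 t = 1} ≤ x := by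
    change (I x).1 ≤ f.1 ↔ _
    rw [hI]
    exact stepFun_one_le_iff_sInf_le f.2.1 f.2.2.1
  have left_adjoint (x : ℝ≥0∞) (f : Distr) : f ≤ I x ↔ x ≤ sSup {t | f.1 t = 0} := by
    change f.1 ≤ (I x).1 ↔ _
    rw [hI]
    exact le_stepFun_one_iff_le_sSup f.2.1 f.2.2.1 (f.2.2.2 x)
  have gc : GaloisConnection (I ∘ OrderDual.ofDual)
      (OrderDual.toDual ∘ fun f : Distr => sInf {t | f.1 t = 1}) :=
    fun x f => right_adjoint (OrderDual.ofDual x) f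
  refine ⟨fun S => gc.isLUB_l_image (isGLB_sInf S).dual, hI 0, fun x y => ?_,
    right_adjoint, left_adjoint⟩
  rw [hI, hI, hI, conv_stepFun, one_mul]
end
end

section
/- In a V-category X = (X,a), for a subset M and x ∈ X with x ∈ cl(M) (i.e. k ≤ ⋁_{y∈M} a(x,y) ⊗ a(y,x)), and any x' ∈ cl(M), one has a(x,x') = ⋁_{y∈M} a(x,y) ⊗ a(y,x'). -/
/-- A (commutative, unital) quantale structure on a complete lattice `V`:
an associative commutative multiplication `⊗` with unit `k` such that
`u ⊗ -` preserves arbitrary suprema. -/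
structure QuantaleStr (V : Type*) [CompleteLattice V] where
  mul : V → V → V
  k : V
  mul_comm : ∀ a b, mul a b = mul b a
  mul_assoc : ∀ a b c, mul (mul a b) c = mul a (mul b c)
  mul_unit : ∀ a, mul a k = a
  mul_sSup : ∀ (a : V) (S : Set V), mul a (sSup S) = ⨆ b ∈ S, mul a b

variable {V : Type*} [CompleteLattice V]

/-- `a : X → X → V` is a `V`-category structure: `k ≤ a x x` and
`a x y ⊗ a y z ≤ a x z`. -/
def IsVCat (Q : QuantaleStr V) {X : Type*} (a : X → X → V) : Prop :=
  (∀ x, Q.k ≤ a x x) ∧ ∀ x y z, Q.mul (a x y) (a y z) ≤ a x z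


/-- The closure of `M ⊆ X` in a `V`-category `(X,a)`:
`cl M = { x | k ≤ ⨆ y ∈ M, a x y ⊗ a y x }`. -/
def vcl (Q : QuantaleStr V) {X : Type*} (a : X → X → V) (M : Set X) : Set X :=
  { x | Q.k ≤ ⨆ y ∈ M, Q.mul (a x y) (a y x) }

namespace QuantaleStr

variable (Q : QuantaleStr V)

theorem mul_iSup {ι : Sort*} (u : V) (f : ι → V) :
    Q.mul u (⨆ i, f i) = ⨆ i, Q.mul u (f i) := by
  rw [← sSup_range, Q.mul_sSup, iSup_range]

theorem mul_sup (u b c : V) : Q.mul u (b ⊔ c) = Q.mul u b ⊔ Q.mul u c := by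
  rw [sup_eq_iSup, Q.mul_iSup, sup_eq_iSup]
  exact iSup_congr fun i => by cases i <;> rfl

theorem mul_mono_right (u : V) : Monotone (Q.mul u) := fun b c h => by
  rw [← sup_eq_right.mpr h, Q.mul_sup]
  exact le_sup_left

theorem mul_mono_left (u : V) : Monotone (Q.mul · u) := fun b c h => by
  simpa only [Q.mul_comm _ u] using Q.mul_mono_right u h

end QuantaleStr

namespace IsVCat

variable {Q : QuantaleStr V} {X : Type*} {a : X → X → V}

theorem iSup_mul_le (ha : IsVCat Q a) (M : Set X) (x z : X) :
    ⨆ y ∈ M, Q.mul (a x y) (a y z) ≤ a x z :=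
  iSup₂_le fun y _ => ha.2 x y z

theorem le_iSup_mul_of_mem_vcl (ha : IsVCat Q a) {M : Set X} {x' : X}
    (hx' : x' ∈ vcl Q a M) (x : X) :
    a x x' ≤ ⨆ y ∈ M, Q.mul (a x y) (a y x') :=
  calc a x x' = Q.mul (a x x') Q.k := (Q.mul_unit _).symm
    _ ≤ Q.mul (a x x') (⨆ y ∈ M, Q.mul (a x' y) (a y x')) := Q.mul_mono_right _ hx'
    _ = ⨆ y ∈ M, Q.mul (Q.mul (a x x') (a x' y)) (a y x') := by
        simp only [Q.mul_iSup, Q.mul_assoc]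
    _ ≤ ⨆ y ∈ M, Q.mul (a x y) (a y x') :=
        iSup₂_mono fun y _ => Q.mul_mono_left _ (ha.2 x x' y)

end IsVCat

theorem closure_distance_general (Q : QuantaleStr V) {X : Type*}
    (a : X → X → V) (ha : IsVCat Q a) (M : Set X) (x x' : X)
    (hx' : x' ∈ vcl Q a M) :
    a x x' = ⨆ y ∈ M, Q.mul (a x y) (a y x') :=
  le_antisymm (ha.le_iSup_mul_of_mem_vcl hx' x) (ha.iSup_mul_le M x x')

/-- If `x, x' ∈ cl M`, then `a x x' = ⨆ y ∈ M, a x y ⊗ a y x'`. -/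
theorem closure_distance (Q : QuantaleStr V) {X : Type*}
    (a : X → X → V) (ha : IsVCat Q a) (M : Set X) (x x' : X)
    (hx : x ∈ vcl Q a M) (hx' : x' ∈ vcl Q a M) :
    a x x' = ⨆ y ∈ M, Q.mul (a x y) (a y x') :=
  closure_distance_general Q a ha M x x' hx'
end

section
/- If k ≤ u ∨ v implies (k ≤ u or k ≤ v) for all u, v ∈ V, then the closure operator on any V-category is finitely additive: cl(M ∪ M') = cl(M) ∪ cl(M'). -/
variable {V : Type*} [CompleteLattice V]

theorem vcl_mono (Q : QuantaleStr V) {X : Type*} (a : X → X → V) : Monotone (vcl Q a) :=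
  fun _ _ hMN _ hx => hx.trans (biSup_mono hMN)

theorem mem_vcl_union_iff (Q : QuantaleStr V) {X : Type*} (a : X → X → V) (M M' : Set X)
    (x : X) :
    x ∈ vcl Q a (M ∪ M') ↔
      Q.k ≤ (⨆ y ∈ M, Q.mul (a x y) (a y x)) ⊔ ⨆ y ∈ M', Q.mul (a x y) (a y x) := by
  simp only [vcl, Set.mem_ofPred_eq, Set.mem_union, iSup_or, iSup_sup_eq]

theorem vclosure_union_general (Q : QuantaleStr V)
    (hk : ∀ u v : V, Q.k ≤ u ⊔ v → Q.k ≤ u ∨ Q.k ≤ v)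
    {X : Type*} (a : X → X → V) (M M' : Set X) :
    vcl Q a (M ∪ M') = vcl Q a M ∪ vcl Q a M' :=
  Set.Subset.antisymm (fun x hx => hk _ _ ((mem_vcl_union_iff Q a M M' x).1 hx))
    (Set.union_subset (vcl_mono Q a Set.subset_union_left)
      (vcl_mono Q a Set.subset_union_right))

/-- If `k ≤ u ⊔ v` implies `k ≤ u` or `k ≤ v`, then the closure operator
of any `V`-category is finitely additive. -/
theorem vclosure_union (Q : QuantaleStr V)
    (hk : ∀ u v : V, Q.k ≤ u ⊔ v → Q.k ≤ u ∨ Q.k ≤ v)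
    {X : Type*} (a : X → X → V) (ha : IsVCat Q a) (M M' : Set X) :
    vcl Q a (M ∪ M') = vcl Q a M ∪ vcl Q a M' :=
  vclosure_union_general Q hk a M M'
end

section
/- The quantale Δ of distribution functions satisfies: for all u, v, w ∈ Δ, w ∧ (u ⊗ v) = ⋁ { u' ⊗ v' : u' ≤ u, v' ≤ v, u' ⊗ v' ≤ w }. (This is the condition guaranteeing that every injective probabilistic metric space is exponentiable.) -/
open scoped ENNReal

noncomputable section

/-!
The inequality `≥` holds termwise. For `≤`, take `c < w t ⊓ (u ⊗ v) t`. Left continuity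
gives `y < t` with `c < w y` and `r + s < t` with `c < u r * v s`. Put `a = u r`, `b = v s`,
`d = max y (r + s) < t`, and convolve the step functions `f_{r,a} ≤ u` and
`f_{d-r, b ⊓ (w y / a)} ≤ v`: the product is the step `f_{d, a b ⊓ w y}`, which lies below `w`
because `y ≤ d`, and its value at `t > d` exceeds `c`.
-/

lemma stepFun_le {f : ℝ≥0∞ → ℝ≥0∞} (hf : Monotone f) {δ c : ℝ≥0∞} (h : c ≤ f δ) :
    stepFun δ c ≤ f := by
  intro x
  unfold stepFun
  split_ifs with hx
  · exact zero_le
  · exact h.trans (hf (not_le.mp hx).le)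

lemma isDistr_stepFun {δ c : ℝ≥0∞} (hc : c ≤ 1) : IsDistr (stepFun δ c) := by
  have hmono : Monotone (stepFun δ c) := fun x y hxy => by
    unfold stepFun
    split_ifs with hx hy hy
    exacts [le_rfl, zero_le, absurd (hxy.trans hy) hx, le_rfl]
  refine ⟨fun t => ?_, hmono, fun x => le_antisymm ?_ (iSup₂_le fun y hy => hmono hy.le)⟩
  · unfold stepFun
    split_ifs
    exacts [zero_le, hc]
  · by_cases hx : x ≤ δ
    · simp only [stepFun, if_pos hx, zero_le]
    · obtain ⟨z, hδz, hzx⟩ := exists_between (not_le.mp hx)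
      refine le_iSup₂_of_le z hzx ?_
      simp only [stepFun, if_neg hx, if_neg (not_le.mpr hδz), le_rfl]

lemma IsDistr.exists_lt_of_lt {f : ℝ≥0∞ → ℝ≥0∞} (hf : IsDistr f) {c t : ℝ≥0∞}
    (h : c < f t) : ∃ y < t, c < f y := by
  rw [hf.2.2 t] at h
  simpa only [lt_iSup_iff, exists_prop] using h

lemma exists_add_lt_of_lt_conv {f g : ℝ≥0∞ → ℝ≥0∞} (hf : IsDistr f) (hg : IsDistr g)
    {c t : ℝ≥0∞} (h : c < conv f g t) : ∃ r s, r + s < t ∧ c < f r * g s := by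
  simp only [conv, lt_iSup_iff] at h
  obtain ⟨r, s, hrst, hc⟩ := h
  rw [hf.2.2 r, hg.2.2 s] at hc
  simp only [ENNReal.iSup_mul, ENNReal.mul_iSup, lt_iSup_iff] at hc
  obtain ⟨s', hs', r', hr', hc⟩ := hc
  exact ⟨r', s', (ENNReal.add_lt_add hr' hs').trans_le hrst, hc⟩

lemma conv_mono {f f' g g' : ℝ≥0∞ → ℝ≥0∞} (hf : f ≤ f') (hg : g ≤ g') (t : ℝ≥0∞) :
    conv f g t ≤ conv f' g' t :=
  iSup₂_le fun r s => iSup_le fun h =>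
    le_iSup₂_of_le r s (le_iSup_of_le h (mul_le_mul' (hf r) (hg s)))

lemma conv_stepFun_s19 (α β a b : ℝ≥0∞) :
    conv (stepFun α a) (stepFun β b) = stepFun (α + β) (a * b) := by
  funext x
  refine le_antisymm (iSup₂_le fun r s => iSup_le fun hrs => ?_) ?_
  · by_cases hr : r ≤ α
    · simp only [stepFun, if_pos hr, zero_mul, zero_le]
    by_cases hs : s ≤ β
    · simp only [stepFun, if_pos hs, mul_zero, zero_le]
    have hx : ¬x ≤ α + β := fun hx =>
      (not_lt.mpr hx) ((ENNReal.add_lt_add (not_le.mp hr) (not_le.mp hs)).trans_le hrs)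
    simp only [stepFun, if_neg hr, if_neg hs, if_neg hx, le_rfl]
  · by_cases hx : x ≤ α + β
    · simp only [stepFun, if_pos hx, zero_le]
    · obtain ⟨z, hαz, hzx⟩ := exists_between (lt_tsub_iff_right.mpr (not_le.mp hx))
      have hβ : β < x - z := lt_tsub_iff_left.mpr (lt_tsub_iff_right.mp hzx)
      have hzx' : z ≤ x := (hzx.trans_le tsub_le_self).le
      refine le_iSup₂_of_le z (x - z) (le_iSup_of_le (add_tsub_cancel_of_le hzx').le ?_)
      simp only [stepFun, if_neg hx, if_neg (not_le.mpr hαz), if_neg (not_le.mpr hβ), le_rfl]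

lemma exists_conv_stepFun_le (u v w : Distr) {r s y t : ℝ≥0∞} (hrs : r + s < t) (hy : y < t)
    (hu : u.1 r ≠ 0) :
    ∃ u' v' : Distr, u' ≤ u ∧ v' ≤ v ∧ (∀ x, conv u'.1 v'.1 x ≤ w.1 x) ∧
      min (u.1 r * v.1 s) (w.1 y) ≤ conv u'.1 v'.1 t := by
  set a := u.1 r
  set b := v.1 s
  set d := max y (r + s)
  have hrd : r ≤ d := le_self_add.trans (le_max_right _ _)
  have hr : r ≠ ∞ := (le_self_add.trans_lt hrs).ne_top
  have hau : a ≠ ∞ := ((u.2.1 r).trans_lt ENNReal.one_lt_top).ne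
  have hab : a * min b (w.1 y / a) = min (a * b) (w.1 y) := by
    rw [mul_min, ENNReal.mul_div_cancel hu hau]
  have hconv : conv (stepFun r a) (stepFun (d - r) (min b (w.1 y / a))) =
      stepFun d (min (a * b) (w.1 y)) := by
    rw [conv_stepFun_s19, add_tsub_cancel_of_le hrd, hab]
  refine ⟨⟨stepFun r a, isDistr_stepFun (u.2.1 r)⟩,
    ⟨stepFun (d - r) (min b (w.1 y / a)), isDistr_stepFun ((min_le_left _ _).trans (v.2.1 s))⟩,
    stepFun_le u.2.2.1 le_rfl, stepFun_le v.2.2.1 ?_, fun x => ?_, ?_⟩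
  · exact (min_le_left _ _).trans (v.2.2.1 (ENNReal.le_sub_of_add_le_left hr (le_max_right _ _)))
  · rw [hconv]
    exact stepFun_le w.2.2.1 ((min_le_right _ _).trans (w.2.2.1 (le_max_left _ _))) x
  · rw [hconv, stepFun, if_neg (not_le.mpr (max_lt hy hrs))]

/-- The quantale `Δ` satisfies
`w ⊓ (u ⊗ v) = ⋁ { u' ⊗ v' : u' ≤ u, v' ≤ v, u' ⊗ v' ≤ w }`
(both sides computed pointwise, as infima and suprema in `Δ` are pointwise
here); this is the condition guaranteeing that every injective probabilistic
metric space is exponentiable. -/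
theorem distr_inf_tensor (u v w : Distr) (t : ℝ≥0∞) :
    min (w.1 t) (conv u.1 v.1 t) =
      ⨆ u' : Distr, ⨆ v' : Distr,
        ⨆ _ : u' ≤ u ∧ v' ≤ v ∧ ∀ s, conv u'.1 v'.1 s ≤ w.1 s,
          conv u'.1 v'.1 t := by
  refine le_antisymm (le_of_forall_lt fun c hc => ?_)
    (iSup₂_le fun u' v' => iSup_le fun ⟨hu, hv, hw⟩ => le_min (hw t) (conv_mono hu hv t))
  obtain ⟨hcw, hcuv⟩ := lt_min_iff.mp hc
  obtain ⟨y, hyt, hcy⟩ := w.2.exists_lt_of_lt hcw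
  obtain ⟨r, s, hrs, hcrs⟩ := exists_add_lt_of_lt_conv u.2 v.2 hcuv
  have hur : u.1 r ≠ 0 := left_ne_zero_of_mul (zero_le.trans_lt hcrs).ne'
  obtain ⟨u', v', hu, hv, hw, hle⟩ := exists_conv_stepFun_le u v w hrs hyt hur
  exact (lt_min hcrs hcy).trans_le (le_iSup₂_of_le u' v' (le_iSup_of_le ⟨hu, hv, hw⟩ hle))
end
end
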